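/- arXiv:2404.09411 — 3 statements merged into one kernel-verified Lean document; each statement's English description precedes it below -/
import Mathlib

section
/- Let D be a symmetric N×N matrix with eigendecomposition of F = −JDJ given by eigenpairs {(λ_i, v_i)}. Then the minimum of ‖D − D'‖_F² over symmetric D' satisfying that −JD'J is positive semidefinite equals Σ_{i: λ_i < 0} λ_i², i.e., the sum of squares of the negative eigenvalues of F. -/
open Matrix

/-- The `N × N` all-ones matrix. -/
def onesM (N : ℕ) : Matrix (Fin N) (Fin N) ℝ := Matrix.of fun _ _ => 1

/-- The averaging matrix `P = (1/N) 1_N 1_Nᵀ`. -/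
noncomputable def avgM (N : ℕ) : Matrix (Fin N) (Fin N) ℝ := (N : ℝ)⁻¹ • onesM N

/-- The centering matrix `J = I_N − (1/N) 1_N 1_Nᵀ`. -/
noncomputable def centerM (N : ℕ) : Matrix (Fin N) (Fin N) ℝ := 1 - avgM N

/-- Squared Frobenius norm. -/
def frobSq {N : ℕ} (M : Matrix (Fin N) (Fin N) ℝ) : ℝ := ∑ i, ∑ j, (M i j) ^ 2

/-!
Write `F = -JDJ` and `G = -JD'J ⪰ 0`. Since `J` is an orthogonal projection, conjugating by it
can only decrease the Frobenius norm, so `‖D - D'‖² ≥ ‖J(D - D')J‖² = ‖F - G‖²`. In an orthonormal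
eigenbasis of `F` this is `‖Λ - H‖²` with `H ⪰ 0`; its diagonal alone gives
`∑ (λᵢ - Hᵢᵢ)² ≥ ∑_{λᵢ < 0} λᵢ²`.

The bound is attained at `D' = D + F₋`, where `F₋ = cfc (min · 0) F` is the negative part of `F`:
`F₋` factors as `F g(F) = g(F) F`, and `JF = FJ = F`, so `JF₋J = F₋` and `-JD'J = F - F₋ ⪰ 0`.
-/

open scoped MatrixOrder

lemma avgM_mul_self (N : ℕ) : avgM N * avgM N = avgM N := by
  rcases Nat.eq_zero_or_pos N with rfl | hN
  · exact Subsingleton.elim _ _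
  · ext i j
    simp only [avgM, onesM, smul_of, mul_apply, of_apply, Pi.smul_apply, smul_eq_mul, mul_one,
      Finset.sum_const, Finset.card_univ, Fintype.card_fin, nsmul_eq_mul, Matrix.smul_apply]
    field_simp

lemma avgM_isHermitian (N : ℕ) : (avgM N).IsHermitian := by
  ext i j; simp [avgM, onesM]

lemma avgM_posSemidef (N : ℕ) : (avgM N).PosSemidef := by
  simpa only [(avgM_isHermitian N).eq, avgM_mul_self] using
    posSemidef_conjTranspose_mul_self (avgM N)

lemma centerM_mul_self (N : ℕ) : centerM N * centerM N = centerM N := by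
  simp [centerM, sub_mul, mul_sub, avgM_mul_self]

lemma centerM_isHermitian (N : ℕ) : (centerM N).IsHermitian :=
  isHermitian_one.sub (avgM_isHermitian N)

section frobSq

variable {N : ℕ}

lemma frobSq_eq_trace (M : Matrix (Fin N) (Fin N) ℝ) : frobSq M = (Mᴴ * M).trace := by
  simp only [frobSq, trace, diag, mul_apply, conjTranspose_apply, star_trivial, sq]
  exact Finset.sum_comm

lemma frobSq_neg (M : Matrix (Fin N) (Fin N) ℝ) : frobSq (-M) = frobSq M := by
  simp [frobSq]

lemma frobSq_transpose (M : Matrix (Fin N) (Fin N) ℝ) : frobSq Mᵀ = frobSq M :=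
  Finset.sum_comm

lemma frobSq_diagonal (d : Fin N → ℝ) : frobSq (diagonal d) = ∑ i, d i ^ 2 := by
  refine Finset.sum_congr rfl fun i _ => ?_
  rw [Finset.sum_eq_single i (fun j _ hj => by simp [diagonal_apply_ne' d hj]) (by simp)]
  simp

lemma frobSq_conjStarAlgAut (u : unitary (Matrix (Fin N) (Fin N) ℝ))
    (M : Matrix (Fin N) (Fin N) ℝ) : frobSq (Unitary.conjStarAlgAut ℝ _ u M) = frobSq M := by
  rw [frobSq_eq_trace, frobSq_eq_trace, ← star_eq_conjTranspose, ← star_eq_conjTranspose,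
    ← map_star, ← map_mul, Unitary.conjStarAlgAut_apply, trace_mul_cycle,
    Unitary.coe_star_mul_self, one_mul]

lemma frobSq_centerM_mul_le (M : Matrix (Fin N) (Fin N) ℝ) :
    frobSq (centerM N * M) ≤ frobSq M := by
  have hsplit : frobSq M = frobSq (centerM N * M) + (Mᴴ * avgM N * M).trace := by
    rw [frobSq_eq_trace, frobSq_eq_trace, conjTranspose_mul, (centerM_isHermitian N).eq,
      ← trace_add, mul_assoc, ← mul_assoc (centerM N), centerM_mul_self, centerM]
    congr 1
    noncomm_ring
  have := ((avgM_posSemidef N).conjTranspose_mul_mul_same M).trace_nonneg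
  linarith

lemma frobSq_mul_centerM_le (M : Matrix (Fin N) (Fin N) ℝ) :
    frobSq (M * centerM N) ≤ frobSq M := by
  have hJ : (centerM N)ᵀ = centerM N := (centerM_isHermitian N).eq
  rw [← frobSq_transpose, transpose_mul, hJ, ← frobSq_transpose M]
  exact frobSq_centerM_mul_le Mᵀ

lemma frobSq_centerM_conj_le (M : Matrix (Fin N) (Fin N) ℝ) :
    frobSq (centerM N * M * centerM N) ≤ frobSq M :=
  (frobSq_mul_centerM_le _).trans (frobSq_centerM_mul_le M)

lemma sum_sq_neg_le_frobSq_diagonal_sub {d : Fin N → ℝ} {H : Matrix (Fin N) (Fin N) ℝ}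
    (hH : H.PosSemidef) :
    ∑ i ∈ Finset.univ.filter (fun i => d i < 0), d i ^ 2 ≤ frobSq (diagonal d - H) :=
  calc ∑ i ∈ Finset.univ.filter (fun i => d i < 0), d i ^ 2
      ≤ ∑ i ∈ Finset.univ.filter (fun i => d i < 0), (d i - H i i) ^ 2 :=
        Finset.sum_le_sum fun i hi => by
          have := (Finset.mem_filter.mp hi).2
          have := hH.diag_nonneg (i := i)
          nlinarith
    _ ≤ ∑ i, (d i - H i i) ^ 2 :=
        Finset.sum_le_sum_of_subset_of_nonneg (Finset.filter_subset _ _) fun _ _ _ => sq_nonneg _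
    _ ≤ frobSq (diagonal d - H) := Finset.sum_le_sum fun i _ => by
        simpa using Finset.single_le_sum (f := fun j => ((diagonal d - H) i j) ^ 2)
          (fun j _ => sq_nonneg _) (Finset.mem_univ i)

end frobSq

namespace Matrix.IsHermitian

section cfc

variable {n 𝕜 : Type*} [Fintype n] [DecidableEq n] [RCLike 𝕜] {A : Matrix n n 𝕜}

/-- The junk value `x / 0 = 0` is harmless: both sides vanish at `0`. -/
lemma cfc_eq_mul_cfc_div (hA : A.IsHermitian) {f : ℝ → ℝ} (hf : f 0 = 0) :
    cfc f A = A * cfc (fun x => f x / x) A := by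
  have hfactor : f = fun x => id x * (f x / x) := by
    funext x
    rcases eq_or_ne x 0 with rfl | hx
    · simp [hf]
    · simp [mul_div_cancel₀ _ hx]
  conv_lhs => rw [hfactor]
  rw [cfc_mul _ _ A (A.finite_real_spectrum.continuousOn _)
    (A.finite_real_spectrum.continuousOn _), cfc_id ℝ A hA.isSelfAdjoint]

lemma cfc_eq_cfc_div_mul (hA : A.IsHermitian) {f : ℝ → ℝ} (hf : f 0 = 0) :
    cfc f A = cfc (fun x => f x / x) A * A := by
  rw [hA.cfc_eq_mul_cfc_div hf]
  simpa only [cfc_id ℝ A hA.isSelfAdjoint] using (cfc_commute_cfc id (fun x => f x / x) A).eq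

lemma mul_cfc_of_mul_eq (hA : A.IsHermitian) {f : ℝ → ℝ} (hf : f 0 = 0) {P : Matrix n n 𝕜}
    (hPA : P * A = A) : P * cfc f A = cfc f A := by
  rw [hA.cfc_eq_mul_cfc_div hf, ← mul_assoc, hPA]

lemma cfc_mul_of_mul_eq (hA : A.IsHermitian) {f : ℝ → ℝ} (hf : f 0 = 0) {P : Matrix n n 𝕜}
    (hAP : A * P = A) : cfc f A * P = cfc f A := by
  rw [hA.cfc_eq_cfc_div_mul hf, mul_assoc, hAP]

lemma posSemidef_neg_conj_add_cfc_min {P D : Matrix n n ℝ} (hP : IsIdempotentElem P)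
    (hA : (-(P * D * P)).IsHermitian) :
    (-(P * (D + cfc (fun x : ℝ => min x 0) (-(P * D * P))) * P)).PosSemidef := by
  have hPA : P * -(P * D * P) = -(P * D * P) := by rw [mul_neg, mul_assoc P D, hP.mul_self_mul]
  have hAP : -(P * D * P) * P = -(P * D * P) := by rw [neg_mul, hP.mul_mul_self]
  have hmin : P * cfc (fun x : ℝ => min x 0) (-(P * D * P)) * P
      = cfc (fun x : ℝ => min x 0) (-(P * D * P)) := by
    rw [hA.mul_cfc_of_mul_eq (f := fun x => min x 0) (min_self 0) hPA,
      hA.cfc_mul_of_mul_eq (f := fun x => min x 0) (min_self 0) hAP]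
  have hsub : -(P * (D + cfc (fun x : ℝ => min x 0) (-(P * D * P))) * P)
      = cfc (fun x : ℝ => x - min x 0) (-(P * D * P)) := by
    have hfin := (-(P * D * P)).finite_real_spectrum
    rw [cfc_sub _ _ _ (hfin.continuousOn _) (hfin.continuousOn _), cfc_id' ℝ _ hA.isSelfAdjoint,
      mul_add, add_mul, hmin]
    abel
  rw [hsub, ← nonneg_iff_posSemidef]
  exact cfc_nonneg fun x _ => sub_nonneg.mpr (min_le_left x 0)

end cfc

variable {N : ℕ} {A : Matrix (Fin N) (Fin N) ℝ}

lemma frobSq_cfc (hA : A.IsHermitian) (f : ℝ → ℝ) :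
    frobSq (cfc f A) = ∑ i, f (hA.eigenvalues i) ^ 2 := by
  rw [hA.cfc_eq, IsHermitian.cfc, frobSq_conjStarAlgAut, frobSq_diagonal]
  rfl

lemma sum_sq_neg_eigenvalues_eq_frobSq_cfc_min (hA : A.IsHermitian) :
    ∑ i ∈ Finset.univ.filter (fun i => hA.eigenvalues i < 0), hA.eigenvalues i ^ 2
      = frobSq (cfc (fun x : ℝ => min x 0) A) := by
  rw [hA.frobSq_cfc, Finset.sum_filter]
  refine Finset.sum_congr rfl fun i _ => ?_
  split_ifs with h
  · rw [min_eq_left h.le]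
  · rw [min_eq_right (not_lt.mp h), sq, zero_mul]

lemma sum_sq_neg_eigenvalues_le_frobSq_sub (hA : A.IsHermitian) {G : Matrix (Fin N) (Fin N) ℝ}
    (hG : G.PosSemidef) :
    ∑ i ∈ Finset.univ.filter (fun i => hA.eigenvalues i < 0), hA.eigenvalues i ^ 2
      ≤ frobSq (A - G) := by
  set φ := Unitary.conjStarAlgAut ℝ (Matrix (Fin N) (Fin N) ℝ) hA.eigenvectorUnitary
  have hAG : A - G = φ (diagonal hA.eigenvalues - φ.symm G) := by
    rw [map_sub, StarAlgEquiv.apply_symm_apply]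
    congr 1
    exact hA.spectral_theorem
  rw [hAG, frobSq_conjStarAlgAut]
  refine sum_sq_neg_le_frobSq_diagonal_sub ?_
  rw [Unitary.conjStarAlgAut_symm_apply, star_eq_conjTranspose]
  exact hG.conjTranspose_mul_mul_same _

end Matrix.IsHermitian

/-- The minimum of `‖D − D'‖_F²` over symmetric `D'` with `−JD'J` positive
    semidefinite equals the sum of the squares of the negative eigenvalues of
    the criterion matrix `F = −JDJ`. -/
theorem min_frobSq_over_psd_criterion {N : ℕ} (D : Matrix (Fin N) (Fin N) ℝ)
    (hD : D.IsSymm)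
    (hF : (-(centerM N * D * centerM N)).IsHermitian) :
    IsLeast
      {s : ℝ | ∃ D' : Matrix (Fin N) (Fin N) ℝ, D'.IsSymm ∧
        (-(centerM N * D' * centerM N)).PosSemidef ∧ s = frobSq (D - D')}
      (∑ i ∈ Finset.univ.filter (fun i => hF.eigenvalues i < 0),
        (hF.eigenvalues i) ^ 2) := by
  constructor
  · have hsymm : (cfc (fun x : ℝ => min x 0) (-(centerM N * D * centerM N))).IsSymm :=
      isHermitian_iff_isSymm.mp (cfc_predicate _ _)
    refine ⟨_, hD.add hsymm, hF.posSemidef_neg_conj_add_cfc_min (centerM_mul_self N), ?_⟩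
    rw [sub_add_cancel_left, frobSq_neg, hF.sum_sq_neg_eigenvalues_eq_frobSq_cfc_min]
  · rintro _ ⟨D', -, hG, rfl⟩
    calc _ ≤ frobSq (-(centerM N * D * centerM N) - -(centerM N * D' * centerM N)) :=
          hF.sum_sq_neg_eigenvalues_le_frobSq_sub hG
      _ = frobSq (centerM N * (D - D') * centerM N) := by
          rw [← frobSq_neg]
          congr 1
          noncomm_ring
      _ ≤ frobSq (D - D') := frobSq_centerM_conj_le _
end

section
/- For a given symmetric N×N matrix A, there exists a unique symmetric N×N matrix B such that A + B is hollow (zero diagonal) and JBJ = 0. -/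
open Matrix

/-!
Write `P = (1/N) 1 1ᵀ`, so `J = 1 - P` and `JBJ = B - PB - BP + PBP`. Hence `JBJ = 0` says that
`B i j = c j + r i - s` with `c` the column means, `r` the row means and `s` the grand mean of `B`,
which forces `B i j + B j i = B i i + B j j`; for symmetric `B` the diagonal therefore determines
`B`, giving uniqueness. Conversely `J` annihilates `1 1ᵀ` on both sides, so it kills every matrix
`u 1ᵀ + 1 uᵀ`, and `u i = -A i i / 2` gives the correction.
-/

section Centering

variable {N : ℕ}

lemma onesM_mul_onesM : onesM N * onesM N = (N : ℝ) • onesM N := by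
  ext i j
  simp [onesM, mul_apply]

lemma centerM_mul_onesM : centerM N * onesM N = 0 := by
  rcases N.eq_zero_or_pos with rfl | hN
  · exact Subsingleton.elim _ _
  rw [centerM, avgM, sub_mul, one_mul, smul_mul_assoc, onesM_mul_onesM, smul_smul,
    inv_mul_cancel₀ (Nat.cast_ne_zero.mpr hN.ne'), one_smul, sub_self]

lemma onesM_mul_centerM : onesM N * centerM N = 0 := by
  rcases N.eq_zero_or_pos with rfl | hN
  · exact Subsingleton.elim _ _
  rw [centerM, avgM, mul_sub, mul_one, mul_smul_comm, onesM_mul_onesM, smul_smul,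
    inv_mul_cancel₀ (Nat.cast_ne_zero.mpr hN.ne'), one_smul, sub_self]

lemma centerM_mul_of_add_mul_centerM_eq_zero (u : Fin N → ℝ) :
    centerM N * of (fun i j => u i + u j) * centerM N = 0 := by
  have h : of (fun i j => u i + u j) = diagonal u * onesM N + onesM N * diagonal u := by
    ext i j
    simp [onesM, diagonal_mul, mul_diagonal]
  rw [h, mul_add, add_mul, Matrix.mul_assoc _ _ (centerM N), Matrix.mul_assoc (diagonal u),
    onesM_mul_centerM, ← Matrix.mul_assoc (centerM N) (onesM N), centerM_mul_onesM]
  simp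

lemma avgM_mul_apply (B : Matrix (Fin N) (Fin N) ℝ) (i j : Fin N) :
    (avgM N * B) i j = (N : ℝ)⁻¹ * ∑ k, B k j := by
  simp [avgM, onesM, mul_apply, Finset.mul_sum]

lemma mul_avgM_apply (B : Matrix (Fin N) (Fin N) ℝ) (i j : Fin N) :
    (B * avgM N) i j = (N : ℝ)⁻¹ * ∑ k, B i k := by
  simp [avgM, onesM, mul_apply, Finset.sum_mul, mul_comm]

lemma centerM_mul_mul_centerM (B : Matrix (Fin N) (Fin N) ℝ) :
    centerM N * B * centerM N = B - avgM N * B - B * avgM N + avgM N * B * avgM N := by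
  unfold centerM
  noncomm_ring

lemma add_apply_swap_eq_of_centerM_mul_mul_centerM_eq_zero {B : Matrix (Fin N) (Fin N) ℝ}
    (hB : centerM N * B * centerM N = 0) (i j : Fin N) :
    B i j + B j i = B i i + B j j := by
  set s := (N : ℝ)⁻¹ * ∑ k, (N : ℝ)⁻¹ * ∑ l, B l k
  have entry : ∀ p q, B p q = (N : ℝ)⁻¹ * ∑ k, B k q + (N : ℝ)⁻¹ * ∑ k, B p k - s := by
    intro p q
    have h := congrFun (congrFun hB p) q
    rw [centerM_mul_mul_centerM] at h
    simp only [Matrix.add_apply, Matrix.sub_apply, Matrix.zero_apply, mul_avgM_apply, avgM_mul_apply] at h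
    linarith
  linarith [entry i j, entry j i, entry i i, entry j j]

end Centering

theorem exists_unique_hollowing_correction_general {N : ℕ}
    (A : Matrix (Fin N) (Fin N) ℝ) :
    ∃! B : Matrix (Fin N) (Fin N) ℝ,
      B.IsSymm ∧ (∀ i, (A + B) i i = 0) ∧
        centerM N * B * centerM N = 0 := by
  refine ⟨of fun i j => -A i i / 2 + -A j j / 2, ⟨?_, fun i => ?_, ?_⟩, ?_⟩
  · ext i j
    simp [add_comm]
  · simp only [Matrix.add_apply, of_apply]
    ring
  · exact centerM_mul_of_add_mul_centerM_eq_zero fun i => -A i i / 2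
  · rintro C ⟨hC, hdiag, hJ⟩
    ext i j
    have hswap := add_apply_swap_eq_of_centerM_mul_mul_centerM_eq_zero hJ i j
    have hsymm : C j i = C i j := by rw [← transpose_apply C i j, hC]
    simp only [Matrix.add_apply] at hdiag
    simp only [of_apply]
    linarith [hdiag i, hdiag j]

/-- For a symmetric matrix `A` there is a unique symmetric matrix `B` such
    that `A + B` is hollow and `JBJ = 0`. -/
theorem exists_unique_hollowing_correction {N : ℕ}
    (A : Matrix (Fin N) (Fin N) ℝ) (hA : A.IsSymm) :
    ∃! B : Matrix (Fin N) (Fin N) ℝ,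
      B.IsSymm ∧ (∀ i, (A + B) i i = 0) ∧
        centerM N * B * centerM N = 0 :=
  exists_unique_hollowing_correction_general A
end

section
/- An N×N matrix D is a Euclidean distance matrix (i.e., there exist points x_1,…,x_N ∈ R^d for some d with D_{ij} = ‖x_i − x_j‖²) if and only if D is symmetric, hollow, entrywise nonnegative, and F = −JDJ is positive semidefinite, where J = I_N − (1/N)·1_N 1_N^T. -/
open Matrix

/-!
Writing `G` for the Gram matrix of the points and `aᵢ = ‖xᵢ‖²`, one has `D = a 1ᵀ + 1 aᵀ - 2G`.
The centering matrix `J` is symmetric and kills `1`, so `-JDJ = 2 JᵀGJ` is positive semidefinite.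
Conversely, factor `-JDJ / 2` as the Gram matrix of points `xᵢ`. Since `J` fixes every vector
with zero coordinate sum, in particular `eᵢ - eⱼ`, the quadratic forms of `D` and `JDJ` agree on
`eᵢ - eⱼ`; for a symmetric hollow `D` this identity reads `‖xᵢ - xⱼ‖² = Dᵢⱼ`.
-/

open scoped InnerProductSpace

theorem dotProduct_mulVec_single_sub_single {n : Type*} [Fintype n] [DecidableEq n]
    (A : Matrix n n ℝ) (i j : n) :
    (Pi.single i 1 - Pi.single j 1) ⬝ᵥ A *ᵥ (Pi.single i 1 - Pi.single j 1) =
      A i i + A j j - A i j - A j i := by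
  simp [sub_dotProduct, dotProduct_sub, mulVec_sub, mulVec_single, single_dotProduct]
  ring

section CenteringMatrix

variable {N : ℕ}

theorem centerM_transpose : (centerM N)ᵀ = centerM N := by
  ext i j
  simp [centerM, avgM, onesM, Matrix.one_apply, eq_comm]

theorem centerM_mulVec_one : centerM N *ᵥ 1 = 0 := by
  ext i
  rcases Nat.eq_zero_or_pos N with rfl | hN
  · exact i.elim0
  · simp [centerM, avgM, onesM, Matrix.mulVec, dotProduct, Matrix.one_apply, hN.ne']

theorem centerM_mulVec_of_sum_eq_zero {u : Fin N → ℝ} (hu : ∑ k, u k = 0) :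
    centerM N *ᵥ u = u := by
  have h_avg : avgM N *ᵥ u = 0 := by
    ext i
    simp [avgM, onesM, mulVec, dotProduct, ← Finset.mul_sum, hu]
  rw [centerM, sub_mulVec, one_mulVec, h_avg, sub_zero]

theorem centerM_mul_vecMulVec_one (c : Fin N → ℝ) : centerM N * vecMulVec 1 c = 0 := by
  rw [mul_vecMulVec, centerM_mulVec_one, zero_vecMulVec]

theorem vecMulVec_one_mul_centerM (c : Fin N → ℝ) : vecMulVec c 1 * centerM N = 0 := by
  rw [vecMulVec_mul, ← mulVec_transpose, centerM_transpose, centerM_mulVec_one, vecMulVec_zero]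

theorem dotProduct_centerM_mul_mul_centerM_mulVec (A : Matrix (Fin N) (Fin N) ℝ)
    {u : Fin N → ℝ} (hu : ∑ k, u k = 0) :
    u ⬝ᵥ (centerM N * A * centerM N) *ᵥ u = u ⬝ᵥ A *ᵥ u := by
  rw [← mulVec_mulVec, ← mulVec_mulVec, dotProduct_mulVec, ← mulVec_transpose, centerM_transpose,
    centerM_mulVec_of_sum_eq_zero hu]

end CenteringMatrix

section GramMatrix

variable {E : Type*} [NormedAddCommGroup E] [InnerProductSpace ℝ E]

theorem of_norm_sub_sq_eq_vecMulVec_add_vecMulVec_sub_gram {n : Type*} (x : n → E) :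
    (of fun i j => ‖x i - x j‖ ^ 2) =
      vecMulVec (fun i => ‖x i‖ ^ 2) 1 + vecMulVec 1 (fun i => ‖x i‖ ^ 2) - (2 : ℝ) • gram ℝ x := by
  ext i j
  simp [gram_apply, norm_sub_sq_real]
  ring

theorem posSemidef_neg_centerM_mul_norm_sub_sq_mul_centerM {N : ℕ} (x : Fin N → E) :
    (-(centerM N * (of fun i j => ‖x i - x j‖ ^ 2) * centerM N)).PosSemidef := by
  have h : -(centerM N * (of fun i j => ‖x i - x j‖ ^ 2) * centerM N) =
      (2 : ℝ) • ((centerM N)ᴴ * gram ℝ x * centerM N) := by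
    rw [of_norm_sub_sq_eq_vecMulVec_add_vecMulVec_sub_gram, conjTranspose_eq_transpose_of_trivial,
      centerM_transpose, Matrix.mul_sub, Matrix.mul_add, Matrix.sub_mul, Matrix.add_mul,
      Matrix.mul_assoc _ (vecMulVec _ 1), vecMulVec_one_mul_centerM, centerM_mul_vecMulVec_one]
    simp
  rw [h]
  exact ((posSemidef_gram ℝ x).conjTranspose_mul_mul_same _).smul (by norm_num)

theorem Matrix.PosSemidef.exists_eq_gram {n : Type*} [Fintype n] {M : Matrix n n ℝ}
    (hM : M.PosSemidef) : ∃ (d : ℕ) (x : n → EuclideanSpace ℝ (Fin d)), M = gram ℝ x := by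
  obtain ⟨d, v, rfl⟩ := posSemidef_iff_eq_sum_vecMulVec.mp hM
  refine ⟨d, fun i => WithLp.toLp 2 fun k => v k i, ?_⟩
  ext i j
  simp [Matrix.sum_apply, vecMulVec_apply, gram_apply, PiLp.inner_apply, mul_comm]

end GramMatrix

/-- Gower criterion: `D` is a Euclidean distance matrix (pairwise squared
    Euclidean distances of some points) iff `D` is symmetric, hollow,
    entrywise nonnegative, and `F = −JDJ` is positive semidefinite. -/
theorem edm_iff_gower {N : ℕ} (D : Matrix (Fin N) (Fin N) ℝ) :
    (∃ (d : ℕ) (x : Fin N → EuclideanSpace ℝ (Fin d)),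
        ∀ i j, D i j = ‖x i - x j‖ ^ 2) ↔
      (D.IsSymm ∧ (∀ i, D i i = 0) ∧ (∀ i j, 0 ≤ D i j) ∧
        (-(centerM N * D * centerM N)).PosSemidef) := by
  constructor
  · rintro ⟨d, x, hD⟩
    obtain rfl : D = of fun i j => ‖x i - x j‖ ^ 2 := by
      ext i j
      exact hD i j
    refine ⟨?_, fun i => by simp, fun i j => sq_nonneg _,
      posSemidef_neg_centerM_mul_norm_sub_sq_mul_centerM x⟩
    ext i j
    simp [norm_sub_rev]
  · rintro ⟨hsymm, hhollow, -, hF⟩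
    obtain ⟨d, x, hx⟩ := (hF.smul (by norm_num : (0 : ℝ) ≤ 2⁻¹)).exists_eq_gram
    refine ⟨d, x, fun i j => ?_⟩
    have hG : ∀ a b, ⟪x a, x b⟫_ℝ = -2⁻¹ * (centerM N * D * centerM N) a b := fun a b => by
      simpa using (congr_fun₂ hx a b).symm
    have h_quad := dotProduct_centerM_mul_mul_centerM_mulVec D
      (u := Pi.single i 1 - Pi.single j 1) (by simp)
    rw [dotProduct_mulVec_single_sub_single, dotProduct_mulVec_single_sub_single] at h_quad
    rw [← real_inner_self_eq_norm_sq, inner_sub_left, inner_sub_right, inner_sub_right,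
      hG, hG, hG, hG]
    linarith [hhollow i, hhollow j, hsymm.apply i j]
end
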